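/- Non-tree-edge insertion without change: Let G be a finite simple graph with real edge weights w, let T be a maximum spanning forest of G, and let e = (u,v) be a new edge not in G with u ≠ v such that u and v are connected in G and w(e) ≤ w(f) for every edge f on the unique path in T from u to v. Then T itself is a maximum spanning forest of the graph G together with the edge e. -/

import Mathlib

/-!
Since `T` already joins `u` and `v`, adding `e = s(u, v)` does not change the connectivity of
`G`, so `T` is still a spanning forest. A spanning forest `F` of `G + e` avoiding `e` is one of
`G` and weighs at most `T`. If `F` contains `e`, then `e` is a bridge of `F`, so `F - e`
separates `u` from `v`; the `T`-path from `u` to `v` therefore has an edge `f` crossing this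
cut, and the exchange `F - e + f` is a spanning forest of `G` of weight at least that of `F`,
as `w e ≤ w f`.
-/

/-- `F` is a spanning forest of `G`: a subgraph of `G` on all of `V` that is acyclic and
has the same connectivity relation as `G`. -/
def IsSpanningForest {V : Type*} (G F : SimpleGraph V) : Prop :=
  F ≤ G ∧ F.IsAcyclic ∧ ∀ u v : V, F.Reachable u v ↔ G.Reachable u v

/-- Total weight of a graph: the sum of the weights of its edges. -/
noncomputable def forestWeight {V : Type*} [Fintype V] (w : Sym2 V → ℝ)
    (F : SimpleGraph V) : ℝ :=
  ∑ e ∈ (Set.toFinite F.edgeSet).toFinset, w e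

/-- `T` is a maximum spanning forest of `G` with respect to the edge weights `w`. -/
def IsMaxSpanningForest {V : Type*} [Fintype V] (G : SimpleGraph V) (w : Sym2 V → ℝ)
    (T : SimpleGraph V) : Prop :=
  IsSpanningForest G T ∧
    ∀ F : SimpleGraph V, IsSpanningForest G F → forestWeight w F ≤ forestWeight w T

open SimpleGraph

namespace SimpleGraph

variable {V : Type*} {G H : SimpleGraph V} {u v x y : V}

theorem Reachable.of_adj_closed {P : V → Prop} (hP : ∀ ⦃a b⦄, G.Adj a b → P a → P b)
    (hx : P x) (hxy : G.Reachable x y) : P y := by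
  by_contra hy
  obtain ⟨p⟩ := hxy
  obtain ⟨d, -, hd, hd'⟩ := p.exists_boundary_dart {a | P a} hx hy
  exact hd' (hP d.adj hd)

theorem reachable_sup_edge_iff (huv : H.Reachable u v) :
    (H ⊔ edge u v).Reachable x y ↔ H.Reachable x y := by
  refine ⟨fun h ↦ h.of_adj_closed (P := H.Reachable x) (fun a b hab hxa ↦ ?_) .rfl,
    fun h ↦ h.mono le_sup_left⟩
  rw [sup_adj, edge_adj] at hab
  rcases hab with hab | ⟨(⟨rfl, rfl⟩ | ⟨rfl, rfl⟩), -⟩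
  exacts [hxa.trans hab.reachable, hxa.trans huv, hxa.trans huv.symm]

theorem Reachable.of_sup_edge (h : (H ⊔ edge u v).Reachable u y) :
    H.Reachable u y ∨ H.Reachable v y := by
  refine h.of_adj_closed (P := fun a ↦ H.Reachable u a ∨ H.Reachable v a)
    (fun a b hab ha ↦ ?_) (.inl .rfl)
  rw [sup_adj, edge_adj] at hab
  rcases hab with hab | ⟨(⟨rfl, rfl⟩ | ⟨rfl, rfl⟩), -⟩
  exacts [ha.imp (·.trans hab.reachable) (·.trans hab.reachable), .inr .rfl, .inl .rfl]

theorem le_of_le_sup_edge (h : H ≤ G ⊔ edge u v) (huv : ¬H.Adj u v) : H ≤ G := by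
  intro a b hab
  have hab' := h hab
  rw [sup_adj, edge_adj] at hab'
  rcases hab' with hG | ⟨(⟨rfl, rfl⟩ | ⟨rfl, rfl⟩), -⟩
  exacts [hG, (huv hab).elim, (huv hab.symm).elim]

theorem deleteEdges_sup_edge (huv : H.Adj u v) : H.deleteEdges {s(u, v)} ⊔ edge u v = H := by
  ext a b
  simp only [sup_adj, deleteEdges_adj, edge_adj, Set.mem_singleton_iff, Sym2.eq_iff]
  grind [H.adj_symm, H.ne_of_adj]

end SimpleGraph

section Weight

variable {V : Type*} [Fintype V] (w : Sym2 V → ℝ) {H : SimpleGraph V} {a b : V}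

theorem forestWeight_sup_edge (hab : a ≠ b) (hn : ¬H.Adj a b) :
    forestWeight w (H ⊔ edge a b) = forestWeight w H + w s(a, b) := by
  classical
  have hedges : (Set.toFinite (H ⊔ edge a b).edgeSet).toFinset =
      insert s(a, b) (Set.toFinite H.edgeSet).toFinset := by
    ext e
    simp [edgeSet_sup, edgeSet_edge_of_ne hab]
  rw [forestWeight, hedges, Finset.sum_insert (by simpa using hn), add_comm]
  rfl

end Weight

section SpanningForest

variable {V : Type*} {G T F : SimpleGraph V} {u v a b : V}

theorem IsSpanningForest.sup_edge (hT : IsSpanningForest G T) (huv : G.Reachable u v) :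
    IsSpanningForest (G ⊔ edge u v) T :=
  ⟨hT.1.trans le_sup_left, hT.2.1,
    fun x y ↦ (hT.2.2 x y).trans (reachable_sup_edge_iff huv).symm⟩

theorem IsSpanningForest.of_sup_edge (hF : IsSpanningForest (G ⊔ edge u v) F)
    (hFuv : ¬F.Adj u v) (huv : G.Reachable u v) : IsSpanningForest G F :=
  ⟨le_of_le_sup_edge hF.1 hFuv, hF.2.1,
    fun x y ↦ (hF.2.2 x y).trans (reachable_sup_edge_iff huv)⟩

theorem IsSpanningForest.not_reachable_deleteEdges (hF : IsSpanningForest G F)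
    (hFuv : F.Adj u v) : ¬(F.deleteEdges {s(u, v)}).Reachable u v :=
  isBridge_iff.1 (isAcyclic_iff_forall_adj_isBridge.1 hF.2.1 hFuv)

theorem IsSpanningForest.exchange (hF : IsSpanningForest (G ⊔ edge u v) F) (hFuv : F.Adj u v)
    (hab : G.Adj a b) (ha : (F.deleteEdges {s(u, v)}).Reachable u a)
    (hb : ¬(F.deleteEdges {s(u, v)}).Reachable u b) :
    IsSpanningForest G (F.deleteEdges {s(u, v)} ⊔ edge a b) := by
  set F₀ := F.deleteEdges {s(u, v)}
  have hF : IsSpanningForest (G ⊔ edge u v) (F₀ ⊔ edge u v) :=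
    deleteEdges_sup_edge hFuv ▸ hF
  have hF₀G : F₀ ≤ G := le_of_le_sup_edge (le_sup_left.trans hF.1) (by simp [F₀])
  have hle : F₀ ⊔ edge a b ≤ G := sup_le hF₀G ((edge_le_iff G).2 (.inr hab))
  have hvb : F₀.Reachable v b := by
    refine ((hF.2.2 u b).2 ?_).of_sup_edge.resolve_left hb
    exact ((ha.mono hF₀G).trans hab.reachable).mono le_sup_left
  have huv : (F₀ ⊔ edge a b).Reachable u v := by
    have hab' : (F₀ ⊔ edge a b).Adj a b :=
      (sup_adj ..).2 (.inr ((edge_adj ..).2 ⟨.inl ⟨rfl, rfl⟩, hab.ne⟩))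
    exact ((ha.mono le_sup_left).trans hab'.reachable).trans (hvb.symm.mono le_sup_left)
  refine ⟨hle, (hF.2.1.anti le_sup_left).sup_edge_of_not_reachable (fun h ↦ hb (ha.trans h)),
    fun x y ↦ ⟨(·.mono hle), fun h ↦ ?_⟩⟩
  rw [← reachable_sup_edge_iff huv]
  exact ((hF.2.2 x y).2 (h.mono le_sup_left)).mono (sup_le_sup_right le_sup_left _)

end SpanningForest

theorem stmt_7_general {V : Type*} [Fintype V] (G : SimpleGraph V) (w : Sym2 V → ℝ)
    (T : SimpleGraph V) (hT : IsMaxSpanningForest G w T)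
    (u v : V) (p : T.Walk u v)
    (hle : ∀ f ∈ p.edges, w s(u, v) ≤ w f) :
    IsMaxSpanningForest (G ⊔ SimpleGraph.edge u v) w T := by
  obtain ⟨hT, hTmax⟩ := hT
  have huv : G.Reachable u v := p.reachable.mono hT.1
  refine ⟨hT.sup_edge huv, fun F hF ↦ ?_⟩
  by_cases hFuv : F.Adj u v
  · set F₀ := F.deleteEdges {s(u, v)}
    obtain ⟨⟨⟨a, b⟩, hab⟩, hd, ha, hb⟩ :=
      p.exists_boundary_dart {x | F₀.Reachable u x} .rfl (hF.not_reachable_deleteEdges hFuv)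
    have hF₀ab : ¬F₀.Adj a b := fun h ↦ hb (ha.trans h.reachable)
    calc forestWeight w F = forestWeight w F₀ + w s(u, v) := by
          rw [← forestWeight_sup_edge w hFuv.ne (by simp [F₀]), deleteEdges_sup_edge hFuv]
      _ ≤ forestWeight w F₀ + w s(a, b) := by
          gcongr
          exact hle _ (p.edges_eq_map_darts ▸ List.mem_map_of_mem hd)
      _ = forestWeight w (F₀ ⊔ edge a b) := (forestWeight_sup_edge w hab.ne hF₀ab).symm
      _ ≤ forestWeight w T := hTmax _ (hF.exchange hFuv (hT.1 hab) ha hb)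
  · exact hTmax F (hF.of_sup_edge hFuv huv)

/-- Non-tree-edge insertion without change: if the new edge `e = s(u,v)` has endpoints
already connected in `G` and its weight is `≤` the weight of every edge on the unique
`T`-path from `u` to `v`, then `T` itself is a maximum spanning forest of `G` with `e`. -/
theorem stmt_7 {V : Type*} [Fintype V] (G : SimpleGraph V) (w : Sym2 V → ℝ)
    (T : SimpleGraph V) (hT : IsMaxSpanningForest G w T)
    (u v : V) (huv : u ≠ v) (hnew : ¬ G.Adj u v) (hconn : G.Reachable u v)
    (p : T.Walk u v) (hp : p.IsPath)
    (hle : ∀ f ∈ p.edges, w s(u, v) ≤ w f) :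
    IsMaxSpanningForest (G ⊔ SimpleGraph.edge u v) w T :=
  stmt_7_general G w T hT u v p hle
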